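/- arXiv:1802.06545 — 3 statements merged into one kernel-verified Lean document; each statement's English description precedes it below -/
import Mathlib

section
/- Let P and T be strings of length m over the natural numbers, where the symbol 0 denotes a wildcard. Define g(p,t) to be 1 if (p-t)^2 * p * t > 0 and 0 otherwise. Then the sum over j from 1 to m of g(P[j], T[j]) equals 0 if and only if for every position j, either P[j] = 0, or T[j] = 0, or P[j] = T[j] (i.e., P matches T under wildcard semantics). -/
theorem stmt_0 (m : ℕ) (P T : Fin m → ℕ) :
    (∑ j, (if ((P j : ℤ) - (T j : ℤ)) ^ 2 * (P j : ℤ) * (T j : ℤ) > 0 then (1 : ℕ) else 0)) = 0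
      ↔ ∀ j, P j = 0 ∨ T j = 0 ∨ P j = T j := by
  rw [Finset.sum_eq_zero_iff]
  constructor
  · intro h j
    have := h j (Finset.mem_univ j)
    by_contra hc
    push_neg at hc
    obtain ⟨h1, h2, h3⟩ := hc
    have hp : (0:ℤ) < P j := by exact_mod_cast Nat.pos_of_ne_zero h1
    have ht : (0:ℤ) < T j := by exact_mod_cast Nat.pos_of_ne_zero h2
    have hne : ((P j : ℤ) - T j) ≠ 0 := by
      intro he; apply h3; exact_mod_cast sub_eq_zero.mp he
    have hpos : ((P j : ℤ) - T j) ^ 2 * P j * T j > 0 := by positivity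
    simp [hpos] at this
  · intro h j _
    rcases h j with h1 | h1 | h1 <;> simp [h1]
end

section
/- Define pattern encoding φ_P : Fin 2 → (Fin 3 → Fin 2) by φ_P(1) = 111 and φ_P(0) = 010, and text encoding φ_T by φ_T(1) = 111 and φ_T(0) = 100. For binary strings P, T of length m, the Hamming distance between the concatenated encodings φ_P(P[1])⋯φ_P(P[m]) and φ_T(T[1])⋯φ_T(T[m]) equals 2·(m − ⟨P,T⟩), where ⟨P,T⟩ is the inner product of P and T over the naturals. In particular, the inner product equals m minus half the Hamming distance of the encoded strings. -/
/-- Pattern encoding: 1 ↦ 111, 0 ↦ 010. -/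
def phiP : Fin 2 → Fin 3 → Fin 2 := fun b k => if b = 1 then 1 else (if k = 1 then 1 else 0)

/-- Text encoding: 1 ↦ 111, 0 ↦ 100. -/
def phiT : Fin 2 → Fin 3 → Fin 2 := fun b k => if b = 1 then 1 else (if k = 0 then 1 else 0)

theorem stmt_3 (m : ℕ) (P T : Fin m → Fin 2) :
    (∑ j, (Finset.univ.filter (fun k : Fin 3 => phiP (P j) k ≠ phiT (T j) k)).card) =
      2 * (m - ∑ j, ((P j : ℕ) * (T j : ℕ))) := by
  have key : ∀ a b : Fin 2,
      (Finset.univ.filter (fun k : Fin 3 => phiP a k ≠ phiT b k)).card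
        + 2 * ((a : ℕ) * (b : ℕ)) = 2 := by decide
  have h1 : (∑ j, (Finset.univ.filter (fun k : Fin 3 => phiP (P j) k ≠ phiT (T j) k)).card)
      + 2 * (∑ j, ((P j : ℕ) * (T j : ℕ))) = 2 * m := by
    rw [Finset.mul_sum, ← Finset.sum_add_distrib]
    calc _ = ∑ _j : Fin m, 2 := Finset.sum_congr rfl (fun j _ => key (P j) (T j))
      _ = 2 * m := by simp [Nat.mul_comm]
  have h2 : (∑ j, ((P j : ℕ) * (T j : ℕ))) ≤ m := by
    calc (∑ j, ((P j : ℕ) * (T j : ℕ))) ≤ ∑ _j : Fin m, 1 := by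
          apply Finset.sum_le_sum
          intro j _
          have hp : (P j : ℕ) ≤ 1 := Nat.lt_succ_iff.mp (P j).isLt
          have ht : (T j : ℕ) ≤ 1 := Nat.lt_succ_iff.mp (T j).isLt
          exact le_trans (Nat.mul_le_mul hp ht) (by norm_num)
      _ = m := by simp
  omega
end

section
/- Let M be an r × r Boolean matrix and v : Fin r → Bool. Let P : Fin (r²) → ℕ be defined by P[i] = (if v i then 1 else 0) for i < r and P[i] = 0 for i ≥ r, and let T be the concatenation of the rows of M (as 0/1 values) followed by r² zeros. Then for each j, the inner product over ℕ of P with the window of T starting at position j·r + 1 equals #{i | M[j][i] = 1 ∧ v[i] = 1}; in particular this inner product is positive if and only if (Mv)[j] = 1 over the Boolean semiring. -/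
theorem stmt_16 (r : ℕ) (M : Fin r → Fin r → Bool) (v : Fin r → Bool)
    (P T : ℕ → ℕ)
    (hP1 : ∀ i : Fin r, P i = if v i then 1 else 0)
    (hP2 : ∀ x, r ≤ x → P x = 0)
    (hT1 : ∀ j i : Fin r, T ((j : ℕ) * r + i) = if M j i then 1 else 0)
    (hT2 : ∀ x, r * r ≤ x → T x = 0) :
    ∀ j : Fin r,
      (∑ i ∈ Finset.range (r * r), P i * T ((j : ℕ) * r + i)) =
          (Finset.univ.filter (fun i : Fin r => M j i = true ∧ v i = true)).card ∧
        (0 < ∑ i ∈ Finset.range (r * r), P i * T ((j : ℕ) * r + i) ↔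
          ∃ i, M j i = true ∧ v i = true) := by
  intro j
  have hsub : Finset.range r ⊆ Finset.range (r * r) := by
    apply Finset.range_subset_range.2
    nlinarith
  have hstep : (∑ i ∈ Finset.range (r * r), P i * T ((j : ℕ) * r + i)) =
      ∑ i ∈ Finset.range r, P i * T ((j : ℕ) * r + i) := by
    refine (Finset.sum_subset hsub ?_).symm
    intro x _ hx
    rw [hP2 x (by simpa using hx)]
    simp
  have key : (∑ i ∈ Finset.range (r * r), P i * T ((j : ℕ) * r + i)) =
      (Finset.univ.filter (fun i : Fin r => M j i = true ∧ v i = true)).card := by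
    rw [hstep, Finset.card_filter, ← Fin.sum_univ_eq_sum_range
      (fun i => P i * T ((j : ℕ) * r + i))]
    apply Finset.sum_congr rfl
    intro i _
    rw [hP1 i, hT1 j i]
    by_cases hM : M j i = true <;> by_cases hv : v i = true <;> simp [hM, hv]
  refine ⟨key, ?_⟩
  rw [key]
  simp [Finset.card_pos, Finset.filter_nonempty_iff]
end
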